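/- Assume ℙ is ψ-mixing. If ω ∈ Ω_ℙ is not a periodic point of T, then ρ_{A_n^ω} → 0 as n → ∞. -/

import Mathlib

open MeasureTheory Filter Set ProbabilityTheory
open scoped ENNReal

namespace Nonconv

variable {𝒜 : Type*} [MeasurableSpace 𝒜]

/-- The left shift `T` on the sequence space `ℕ → 𝒜`. -/
def shift : (ℕ → 𝒜) → ℕ → 𝒜 := fun ω i => ω (i + 1)

/-- The `n`-cylinder `[a₀,…,a_{n-1}]` determined by the first `n` symbols of `a`. -/
def cyl (n : ℕ) (a : ℕ → 𝒜) : Set (ℕ → 𝒜) := {ω | ∀ i < n, ω i = a i}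

/-- The sub-σ-algebra `ℱ_I` generated by the coordinates in `I`. -/
def coordSigma (I : Set ℕ) : MeasurableSpace (ℕ → 𝒜) :=
  ⨆ i ∈ I, MeasurableSpace.comap (fun ω => ω i) inferInstance

/-- The set of ratios `|μ(B∩C)/(μ(B)μ(C)) − 1|` over `B ∈ G`, `C ∈ H` with
`μ(B)μ(C) ≠ 0`. -/
def psiSet (μ : Measure (ℕ → 𝒜)) (G H : MeasurableSpace (ℕ → 𝒜)) : Set ℝ :=
  {x | ∃ B C : Set (ℕ → 𝒜), MeasurableSet[G] B ∧ MeasurableSet[H] C ∧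
    μ B ≠ 0 ∧ μ C ≠ 0 ∧
    x = |(μ (B ∩ C)).toReal / ((μ B).toReal * (μ C).toReal) - 1|}

/-- The ψ-dependence coefficient `ψ(G,H)`. -/
noncomputable def psi (μ : Measure (ℕ → 𝒜)) (G H : MeasurableSpace (ℕ → 𝒜)) : ℝ :=
  sSup (psiSet μ G H)

/-- The set whose supremum defines `ψ_m`. -/
def psiMixSet (μ : Measure (ℕ → 𝒜)) (m : ℕ) : Set ℝ :=
  ⋃ n : ℕ, psiSet μ (coordSigma {i | i ≤ n}) (coordSigma {i | n + m + 1 ≤ i})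

/-- The ψ-mixing coefficient `ψ_m = sup_n ψ(ℱ_{0,n}, ℱ_{n+m+1,∞})`. -/
noncomputable def psiMix (μ : Measure (ℕ → 𝒜)) (m : ℕ) : ℝ := sSup (psiMixSet μ m)

/-- `μ` is ψ-mixing: `ψ_0 < ∞` and `ψ_m → 0` as `m → ∞`. -/
def IsPsiMixing (μ : Measure (ℕ → 𝒜)) : Prop :=
  BddAbove (psiMixSet μ 0) ∧ Tendsto (psiMix μ) atTop (nhds 0)

/-- `π(A)` for the cylinder `A = cyl n a`:
the minimal `k ∈ {1,…,n}` with `A ∩ T^{-k}A ≠ ∅`. -/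
noncomputable def piCyl (n : ℕ) (a : ℕ → 𝒜) : ℕ :=
  sInf {k : ℕ | 1 ≤ k ∧ k ≤ n ∧ (cyl n a ∩ shift^[k] ⁻¹' cyl n a).Nonempty}

/-- Periodic extension of the string `a` with period `r`, so that
`cyl m (per r a)` is the cylinder `R^{m/r}` if `R = cyl r a`. -/
def per (r : ℕ) (a : ℕ → 𝒜) : ℕ → 𝒜 := fun i => a (i % r)

/-- `κ = lcm { r / gcd(r, dᵢ) : 1 ≤ i ≤ ℓ }`. -/
def kap (ℓ : ℕ) (d : Fin ℓ → ℕ) (r : ℕ) : ℕ :=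
  Finset.univ.lcm fun i => r / Nat.gcd r (d i)

/-- `ρ_A = ∏ᵢ ℙ(R^{(n+dᵢκ)/r} | A)` for `A = cyl n a`, `r = π(A)`, `R = A(π)`. -/
noncomputable def rho (μ : Measure (ℕ → 𝒜)) (ℓ : ℕ) (d : Fin ℓ → ℕ) (n : ℕ)
    (a : ℕ → 𝒜) : ℝ :=
  ∏ i : Fin ℓ,
    (μ (cyl (n + d i * kap ℓ d (piCyl n a)) (per (piCyl n a) a) ∩ cyl n a)).toReal /
      (μ (cyl n a)).toReal

/-- The multiple recurrence event `{X_k^A = 1} = ∩ᵢ T^{-qᵢ(k)}A`. -/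
def hitEvent (ℓ : ℕ) (q : Fin ℓ → ℕ → ℕ) (A : Set (ℕ → 𝒜)) (k : ℕ) : Set (ℕ → 𝒜) :=
  {ω | ∀ i : Fin ℓ, shift^[q i k] ω ∈ A}

/-- The nonconventional sum `S_N^A = ∑_{k=1}^N ∏ᵢ 1_A ∘ T^{qᵢ(k)}`. -/
noncomputable def SN (ℓ : ℕ) (q : Fin ℓ → ℕ → ℕ) (A : Set (ℕ → 𝒜)) (N : ℕ)
    (ω : ℕ → 𝒜) : ℕ :=
  ∑ k ∈ Finset.Icc 1 N, Set.indicator (hitEvent ℓ q A k) (fun _ => 1) ω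

/-- The probability a Poisson random variable with parameter `t` lies in `L`. -/
noncomputable def poissonProb (t : ℝ) (L : Set ℕ) : ℝ :=
  ∑' l : L, Real.exp (-t) * t ^ (l : ℕ) / Nat.factorial (l : ℕ)

/-- `℘(x) = x eˣ`. -/
noncomputable def wp (x : ℝ) : ℝ := x * Real.exp x

/-- `g(n) = inf_{k ≥ n} min_{1 ≤ i ≤ ℓ-1} (q_{i+1}(k) − q_i(k))`, valued in `ℕ∞`. -/
noncomputable def gfun (ℓ : ℕ) (q : Fin ℓ → ℕ → ℕ) (n : ℕ) : ℕ∞ :=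
  ⨅ (k : ℕ) (_ : n ≤ k) (i : Fin ℓ) (j : Fin ℓ) (_ : (i : ℕ) + 1 = (j : ℕ)),
    ((q j k - q i k : ℕ) : ℕ∞)

/-- `γ(n) = min {k ≥ 0 : g(k) ≥ 2n}`. -/
noncomputable def gam (ℓ : ℕ) (q : Fin ℓ → ℕ → ℕ) (n : ℕ) : ℕ :=
  sInf {k : ℕ | ((2 * n : ℕ) : ℕ∞) ≤ gfun ℓ q k}

/-- The nonconventional hitting time
`τ_A(ω) = min {k ≥ 1 : ∏ᵢ 1_A(T^{dᵢk}ω) = 1}`, valued in `ℝ≥0∞` (equal to `∞` if no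
such `k` exists). -/
noncomputable def tauA (ℓ : ℕ) (d : Fin ℓ → ℕ) (A : Set (ℕ → 𝒜)) (ω : ℕ → 𝒜) : ℝ≥0∞ :=
  sInf {x : ℝ≥0∞ | ∃ k : ℕ, 1 ≤ k ∧ (∀ i : Fin ℓ, shift^[d i * k] ω ∈ A) ∧ x = (k : ℝ≥0∞)}

set_option linter.unusedSectionVars false

/-!
Write `A = A_n^ω`, `r = π(A)` and `m = d₁κ`. Since `ω` is not periodic, `r → ∞`; and `m` is a
multiple of `lcm(r, d₁)`, so `m ≥ r`. Every factor of `ρ_A` is at most `1`, and the first one is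
`ℙ(R^{(n+m)/r} ∩ A) / ℙ(A)` with `R^{(n+m)/r} ⊆ T^{-(n+g)} C` for an `(m-g)`-cylinder `C`.
The ψ-mixing inequality with gap `g` bounds `ℙ(A ∩ T^{-(n+g)} C)` by `(1 + ψ_g) ℙ(A) ℙ(C)`, and the
same inequality, iterated along blocks of length `g + 1`, gives `ℙ(C) ≤ θ^{(m-g)/(g+1)}` with
`θ = (1 + ψ_g) p`, where `p < 1` bounds the measure of every `1`-cylinder (two symbols carry
positive mass). For `g` large `θ < 1`.
-/

lemma shift_iterate_apply (t : ℕ) (x : ℕ → 𝒜) (i : ℕ) : shift^[t] x i = x (i + t) := by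
  induction t generalizing x with
  | zero => rfl
  | succ t ih => rw [Function.iterate_succ_apply, ih]; rfl

lemma cyl_antitone {n N : ℕ} (h : n ≤ N) (w : ℕ → 𝒜) : cyl N w ⊆ cyl n w :=
  fun _ hx i hi => hx i (hi.trans_le h)

lemma cyl_subset_preimage_shift_iterate_cyl {t L N : ℕ} (h : L ≤ N - t) (w : ℕ → 𝒜) :
    cyl N w ⊆ shift^[t] ⁻¹' cyl L (fun j => w (j + t)) := by
  intro x hx j hj
  rw [shift_iterate_apply]
  exact hx _ (by omega)

lemma exists_apply_add_ne_of_not_isPeriodicPt {x : ℕ → 𝒜} {r : ℕ}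
    (h : ¬ Function.IsPeriodicPt shift r x) : ∃ i, x (i + r) ≠ x i := by
  by_contra! hper
  exact h (funext fun i => (shift_iterate_apply r x i).trans (hper i))

lemma piCyl_mem {n : ℕ} (hn : 1 ≤ n) (a : ℕ → 𝒜) :
    1 ≤ piCyl n a ∧ piCyl n a ≤ n ∧ (cyl n a ∩ shift^[piCyl n a] ⁻¹' cyl n a).Nonempty :=
  Nat.sInf_mem (s := {k | 1 ≤ k ∧ k ≤ n ∧ (cyl n a ∩ shift^[k] ⁻¹' cyl n a).Nonempty})
    ⟨n, hn, le_rfl, per n a, fun i hi => by simp [per, Nat.mod_eq_of_lt hi],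
      fun i hi => by simp [shift_iterate_apply, per, Nat.mod_eq_of_lt hi]⟩

lemma apply_add_piCyl_eq {n i : ℕ} (a : ℕ → 𝒜) (hi : i + piCyl n a < n) :
    a (i + piCyl n a) = a i := by
  obtain ⟨-, -, x, hx, hshift⟩ := piCyl_mem (n := n) (by omega) a
  rw [← hx _ hi, ← hshift i (by omega), shift_iterate_apply]

lemma tendsto_piCyl_atTop {x : ℕ → 𝒜}
    (hnp : ∀ r : ℕ, 0 < r → ¬ Function.IsPeriodicPt shift r x) :
    Tendsto (fun n => piCyl n x) atTop atTop := by
  have hne : ∀ r, ∀ᶠ n in atTop, piCyl n x ≠ r := by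
    intro r
    rcases Nat.eq_zero_or_pos r with rfl | hr
    · filter_upwards [eventually_ge_atTop 1] with n hn
      using Nat.pos_iff_ne_zero.1 (piCyl_mem hn x).1
    · obtain ⟨i, hi⟩ := exists_apply_add_ne_of_not_isPeriodicPt (hnp r hr)
      filter_upwards [eventually_gt_atTop (i + r)] with n hn hr'
      subst hr'
      exact hi (apply_add_piCyl_eq x hn)
  refine tendsto_atTop.2 fun M =>
    ((eventually_all_finset (Finset.range M)).2 fun r _ => hne r).mono fun n hn => ?_
  by_contra! h
  exact hn _ (Finset.mem_range.2 h) rfl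

lemma kap_pos (ℓ : ℕ) (d : Fin ℓ → ℕ) {r : ℕ} (hr : 0 < r) : 0 < kap ℓ d r := by
  refine Nat.pos_of_ne_zero fun h => ?_
  obtain ⟨i, -, hi⟩ := Finset.lcm_eq_zero_iff.1 h
  exact (Nat.div_pos (Nat.gcd_le_left _ hr) (Nat.gcd_pos_of_pos_left _ hr)).ne' hi

lemma dvd_mul_kap (ℓ : ℕ) (d : Fin ℓ → ℕ) (r : ℕ) (i : Fin ℓ) : r ∣ d i * kap ℓ d r :=
  calc r = r / Nat.gcd r (d i) * Nat.gcd r (d i) :=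
        (Nat.div_mul_cancel (Nat.gcd_dvd_left r (d i))).symm
    _ ∣ kap ℓ d r * d i :=
        mul_dvd_mul (Finset.dvd_lcm (Finset.mem_univ i)) (Nat.gcd_dvd_right r (d i))
    _ = d i * kap ℓ d r := mul_comm _ _

lemma le_mul_kap {ℓ : ℕ} {d : Fin ℓ → ℕ} {r : ℕ} (hr : 0 < r) {i : Fin ℓ} (hdi : 0 < d i) :
    r ≤ d i * kap ℓ d r :=
  Nat.le_of_dvd (Nat.mul_pos hdi (kap_pos ℓ d hr)) (dvd_mul_kap ℓ d r i)

lemma le_coordSigma {I : Set ℕ} {i : ℕ} (hi : i ∈ I) :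
    MeasurableSpace.comap (fun x : ℕ → 𝒜 => x i) inferInstance ≤ coordSigma I :=
  le_iSup₂ (f := fun j (_ : j ∈ I) => MeasurableSpace.comap (fun x : ℕ → 𝒜 => x j) inferInstance)
    i hi

lemma coordSigma_le_pi (I : Set ℕ) : coordSigma (𝒜 := 𝒜) I ≤ MeasurableSpace.pi :=
  iSup₂_le fun i _ =>
    le_iSup (fun j => MeasurableSpace.comap (fun x : ℕ → 𝒜 => x j) inferInstance) i

lemma psiMix_nonneg (μ : Measure (ℕ → 𝒜)) (m : ℕ) : 0 ≤ psiMix μ m :=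
  Real.sSup_nonneg fun _ hx => by
    obtain ⟨n, B, C, -, -, -, -, rfl⟩ := mem_iUnion.1 hx
    exact abs_nonneg _

lemma psiMixSet_subset_psiMixSet_zero (μ : Measure (ℕ → 𝒜)) (m : ℕ) :
    psiMixSet μ m ⊆ psiMixSet μ 0 := by
  intro x hx
  obtain ⟨n, B, C, hB, hC, hB0, hC0, rfl⟩ := mem_iUnion.1 hx
  have hle : coordSigma (𝒜 := 𝒜) {i | i ≤ n} ≤ coordSigma {i | i ≤ n + m} :=
    biSup_mono fun i (hi : i ≤ n) => hi.trans (Nat.le_add_right n m)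
  exact mem_iUnion.2 ⟨n + m, B, C, hle _ hB, hC, hB0, hC0, rfl⟩

lemma measure_inter_le_one_add_psiMix_mul {μ : Measure (ℕ → 𝒜)} [IsFiniteMeasure μ]
    (hbdd : BddAbove (psiMixSet μ 0)) {m n : ℕ} {B C : Set (ℕ → 𝒜)}
    (hB : MeasurableSet[coordSigma {i | i ≤ n}] B)
    (hC : MeasurableSet[coordSigma {i | n + m + 1 ≤ i}] C) :
    (μ (B ∩ C)).toReal ≤ (1 + psiMix μ m) * ((μ B).toReal * (μ C).toReal) := by
  by_cases hB0 : μ B = 0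
  · simp [measure_mono_null inter_subset_left hB0, hB0]
  by_cases hC0 : μ C = 0
  · simp [measure_mono_null inter_subset_right hC0, hC0]
  have hBC : 0 < (μ B).toReal * (μ C).toReal :=
    mul_pos (ENNReal.toReal_pos hB0 (measure_ne_top μ B))
      (ENNReal.toReal_pos hC0 (measure_ne_top μ C))
  have hψ : |(μ (B ∩ C)).toReal / ((μ B).toReal * (μ C).toReal) - 1| ≤ psiMix μ m :=
    le_csSup (hbdd.mono (psiMixSet_subset_psiMixSet_zero μ m))
      (mem_iUnion.2 ⟨n, B, C, hB, hC, hB0, hC0, rfl⟩)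
  rw [← div_le_iff₀ hBC]
  linarith [le_abs_self ((μ (B ∩ C)).toReal / ((μ B).toReal * (μ C).toReal) - 1)]

lemma rho_le_measure_inter_div (μ : Measure (ℕ → 𝒜)) [IsFiniteMeasure μ] {ℓ : ℕ}
    (d : Fin ℓ → ℕ) (n : ℕ) (a : ℕ → 𝒜) (i₀ : Fin ℓ) :
    rho μ ℓ d n a ≤
      (μ (cyl (n + d i₀ * kap ℓ d (piCyl n a)) (per (piCyl n a) a) ∩ cyl n a)).toReal /
        (μ (cyl n a)).toReal := by
  classical
  set f : Fin ℓ → ℝ := fun i =>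
    (μ (cyl (n + d i * kap ℓ d (piCyl n a)) (per (piCyl n a) a) ∩ cyl n a)).toReal /
      (μ (cyl n a)).toReal
  have hf : ∀ i, 0 ≤ f i ∧ f i ≤ 1 := fun i =>
    ⟨by positivity, div_le_one_of_le₀
      (ENNReal.toReal_mono (measure_ne_top μ _) (measure_mono inter_subset_right))
      ENNReal.toReal_nonneg⟩
  calc rho μ ℓ d n a = f i₀ * ∏ i ∈ Finset.univ.erase i₀, f i :=
        (Finset.mul_prod_erase _ f (Finset.mem_univ i₀)).symm
    _ ≤ f i₀ := mul_le_of_le_one_right (hf i₀).1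
        (Finset.prod_le_one (fun i _ => (hf i).1) fun i _ => (hf i).2)

section Cylinders

variable [MeasurableSingletonClass 𝒜]

lemma measurableSet_coordSigma_preimage_cyl {I : Set ℕ} {t L : ℕ} (hI : ∀ j < L, j + t ∈ I)
    (w : ℕ → 𝒜) : MeasurableSet[coordSigma I] (shift^[t] ⁻¹' cyl L w) := by
  have hcyl : shift^[t] ⁻¹' cyl L w =
      ⋂ j ∈ Finset.range L, (fun x : ℕ → 𝒜 => x (j + t)) ⁻¹' {w j} := by
    ext x
    simp [cyl, shift_iterate_apply]
  rw [hcyl]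
  exact .biInter (Finset.range L).countable_toSet fun j hj =>
    Measurable.of_comap_le (le_coordSigma (hI j (Finset.mem_range.1 hj)))
      (measurableSet_singleton _)

lemma measurableSet_cyl (n : ℕ) (a : ℕ → 𝒜) : MeasurableSet (cyl n a) :=
  coordSigma_le_pi univ _ (measurableSet_coordSigma_preimage_cyl (t := 0) (fun _ _ => mem_univ _) a)

lemma measure_cyl_inter_preimage_cyl_le {μ : Measure (ℕ → 𝒜)} [IsFiniteMeasure μ]
    (hinv : MeasurePreserving shift μ μ) (hbdd : BddAbove (psiMixSet μ 0))
    (n g L : ℕ) (a w : ℕ → 𝒜) :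
    (μ (cyl (n + 1) a ∩ shift^[n + g + 1] ⁻¹' cyl L w)).toReal ≤
      (1 + psiMix μ g) * ((μ (cyl (n + 1) a)).toReal * (μ (cyl L w)).toReal) := by
  have hA : MeasurableSet[coordSigma {i | i ≤ n}] (cyl (n + 1) a) :=
    measurableSet_coordSigma_preimage_cyl (t := 0) (fun j hj => show j + 0 ≤ n by omega) a
  have hC : MeasurableSet[coordSigma {i | n + g + 1 ≤ i}] (shift^[n + g + 1] ⁻¹' cyl L w) :=
    measurableSet_coordSigma_preimage_cyl (fun j _ => show n + g + 1 ≤ j + (n + g + 1) by omega) w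
  rw [← (hinv.iterate (n + g + 1)).measure_preimage (measurableSet_cyl L w).nullMeasurableSet]
  exact measure_inter_le_one_add_psiMix_mul hbdd hA hC

lemma measure_cyl_le_pow {μ : Measure (ℕ → 𝒜)} [IsProbabilityMeasure μ]
    (hinv : MeasurePreserving shift μ μ) (hbdd : BddAbove (psiMixSet μ 0)) {g : ℕ} {p : ℝ}
    (hp : ∀ w : ℕ → 𝒜, (μ (cyl 1 w)).toReal ≤ p) {k L : ℕ} (hL : k * (g + 1) ≤ L)
    (w : ℕ → 𝒜) : (μ (cyl L w)).toReal ≤ ((1 + psiMix μ g) * p) ^ k := by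
  induction k generalizing L w with
  | zero =>
    simpa using ENNReal.toReal_mono ENNReal.one_ne_top (prob_le_one (μ := μ) (s := cyl L w))
  | succ k ih =>
    rw [Nat.succ_mul] at hL
    set w' : ℕ → 𝒜 := fun j => w (j + (g + 1))
    have hsub : cyl L w ⊆ cyl (0 + 1) w ∩ shift^[0 + g + 1] ⁻¹' cyl (L - (g + 1)) w' :=
      subset_inter (cyl_antitone (by omega) w)
        (by simpa only [zero_add] using cyl_subset_preimage_shift_iterate_cyl le_rfl w)
    have hψ : 0 ≤ 1 + psiMix μ g := by linarith [psiMix_nonneg μ g]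
    have hp0 : 0 ≤ p := ENNReal.toReal_nonneg.trans (hp w)
    calc (μ (cyl L w)).toReal
        ≤ (μ (cyl (0 + 1) w ∩ shift^[0 + g + 1] ⁻¹' cyl (L - (g + 1)) w')).toReal :=
          ENNReal.toReal_mono (measure_ne_top μ _) (measure_mono hsub)
      _ ≤ (1 + psiMix μ g) * ((μ (cyl 1 w)).toReal * (μ (cyl (L - (g + 1)) w')).toReal) :=
          measure_cyl_inter_preimage_cyl_le hinv hbdd 0 g _ w w'
      _ ≤ (1 + psiMix μ g) * (p * ((1 + psiMix μ g) * p) ^ k) := by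
          gcongr
          · exact hp w
          · exact ih (by omega) w'
      _ = ((1 + psiMix μ g) * p) ^ (k + 1) := by ring

lemma rho_succ_le {μ : Measure (ℕ → 𝒜)} [IsProbabilityMeasure μ]
    (hinv : MeasurePreserving shift μ μ) (hbdd : BddAbove (psiMixSet μ 0)) {g : ℕ} {p : ℝ}
    (hp : ∀ w : ℕ → 𝒜, (μ (cyl 1 w)).toReal ≤ p) {ℓ : ℕ} (d : Fin ℓ → ℕ) (i₀ : Fin ℓ)
    (n : ℕ) (a : ℕ → 𝒜) :
    rho μ ℓ d (n + 1) a ≤ (1 + psiMix μ g) *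
      ((1 + psiMix μ g) * p) ^ ((d i₀ * kap ℓ d (piCyl (n + 1) a) - g) / (g + 1)) := by
  set m := d i₀ * kap ℓ d (piCyl (n + 1) a)
  set θ := (1 + psiMix μ g) * p
  set b := per (piCyl (n + 1) a) a
  set C := cyl (m - g) fun j => b (j + (n + g + 1))
  have hψ : 0 ≤ 1 + psiMix μ g := by linarith [psiMix_nonneg μ g]
  have hθ : 0 ≤ θ := mul_nonneg hψ (ENNReal.toReal_nonneg.trans (hp a))
  have hsub : cyl (n + 1 + m) b ∩ cyl (n + 1) a ⊆ cyl (n + 1) a ∩ shift^[n + g + 1] ⁻¹' C :=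
    fun x hx => ⟨hx.2, cyl_subset_preimage_shift_iterate_cyl (by omega) b hx.1⟩
  have hnum : (μ (cyl (n + 1 + m) b ∩ cyl (n + 1) a)).toReal ≤
      (1 + psiMix μ g) * θ ^ ((m - g) / (g + 1)) * (μ (cyl (n + 1) a)).toReal :=
    calc (μ (cyl (n + 1 + m) b ∩ cyl (n + 1) a)).toReal
        ≤ (μ (cyl (n + 1) a ∩ shift^[n + g + 1] ⁻¹' C)).toReal :=
          ENNReal.toReal_mono (measure_ne_top μ _) (measure_mono hsub)
      _ ≤ (1 + psiMix μ g) * ((μ (cyl (n + 1) a)).toReal * (μ C).toReal) :=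
          measure_cyl_inter_preimage_cyl_le hinv hbdd n g _ a _
      _ ≤ (1 + psiMix μ g) * ((μ (cyl (n + 1) a)).toReal * θ ^ ((m - g) / (g + 1))) := by
          gcongr
          exact measure_cyl_le_pow hinv hbdd hp (Nat.div_mul_le_self _ _) _
      _ = (1 + psiMix μ g) * θ ^ ((m - g) / (g + 1)) * (μ (cyl (n + 1) a)).toReal := by ring
  exact (rho_le_measure_inter_div μ d (n + 1) a i₀).trans
    (div_le_of_le_mul₀ ENNReal.toReal_nonneg (mul_nonneg hψ (pow_nonneg hθ _)) hnum)

lemma exists_lt_one_forall_measure_cyl_one_le [Nontrivial 𝒜] {μ : Measure (ℕ → 𝒜)}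
    [IsProbabilityMeasure μ] (hpos : ∀ a : 𝒜, 0 < μ (cyl 1 fun _ => a)) :
    ∃ p < 1, ∀ w : ℕ → 𝒜, (μ (cyl 1 w)).toReal ≤ p := by
  obtain ⟨a, b, hab⟩ := exists_pair_ne 𝒜
  have hle : ∀ (c : 𝒜) (w : ℕ → 𝒜), w 0 ≠ c →
      (μ (cyl 1 w)).toReal ≤ (1 - μ (cyl 1 fun _ => c)).toReal := by
    intro c w hc
    refine ENNReal.toReal_mono (by simp) ?_
    rw [← prob_compl_eq_one_sub (measurableSet_cyl 1 _)]
    exact measure_mono fun x hx hxc => hc ((hx 0 one_pos).symm.trans (hxc 0 one_pos))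
  have hlt : ∀ c : 𝒜, (1 - μ (cyl 1 fun _ => c)).toReal < 1 := fun c => by
    simpa using ENNReal.toReal_strict_mono ENNReal.one_ne_top
      (ENNReal.sub_lt_self ENNReal.one_ne_top one_ne_zero (hpos c).ne')
  refine ⟨_, max_lt (hlt a) (hlt b), fun w => ?_⟩
  rcases ne_or_eq (w 0) a with h | h
  · exact (hle a w h).trans (le_max_left _ _)
  · exact (hle b w (h ▸ hab)).trans (le_max_right _ _)

end Cylinders

theorem rho_tendsto_zero_of_not_periodic_general
    [MeasurableSingletonClass 𝒜] [Nontrivial 𝒜]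
    (μ : Measure (ℕ → 𝒜)) [IsProbabilityMeasure μ]
    (hinv : MeasurePreserving (shift : (ℕ → 𝒜) → ℕ → 𝒜) μ μ)
    (hpos : ∀ a : 𝒜, 0 < μ (cyl 1 fun _ => a))
    (hmix : IsPsiMixing μ)
    (ℓ : ℕ) (hl : 0 < ℓ) (d : Fin ℓ → ℕ) (hd1 : ∀ i, 1 ≤ d i)
    (ω : ℕ → 𝒜)
    (hnp : ∀ dper : ℕ, 0 < dper → ¬ Function.IsPeriodicPt shift dper ω) :
    Tendsto (fun n => rho μ ℓ d n ω) atTop (nhds 0) := by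
  obtain ⟨p, hp1, hp⟩ := exists_lt_one_forall_measure_cyl_one_le hpos
  have hp0 : 0 ≤ p := ENNReal.toReal_nonneg.trans (hp ω)
  obtain ⟨g, hg⟩ : ∃ g, (1 + psiMix μ g) * p < 1 :=
    (((hmix.2.const_add 1).mul_const p).eventually (gt_mem_nhds (by simpa using hp1))).exists
  set i₀ : Fin ℓ := ⟨0, hl⟩
  have hexp : Tendsto (fun n => (d i₀ * kap ℓ d (piCyl (n + 1) ω) - g) / (g + 1)) atTop atTop :=
    (Nat.tendsto_div_const_atTop (Nat.succ_ne_zero g)).comp <| (tendsto_sub_atTop_nat g).comp <|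
      tendsto_atTop_mono (fun n => le_mul_kap (piCyl_mem (by omega) ω).1 (hd1 i₀))
        ((tendsto_piCyl_atTop hnp).comp (tendsto_add_atTop_nat 1))
  have hbound : Tendsto (fun n => (1 + psiMix μ g) * ((1 + psiMix μ g) * p) ^
      ((d i₀ * kap ℓ d (piCyl (n + 1) ω) - g) / (g + 1))) atTop (nhds 0) := by
    simpa using ((tendsto_pow_atTop_nhds_zero_of_lt_one
      (mul_nonneg (by linarith [psiMix_nonneg μ g]) hp0) hg).comp hexp).const_mul (1 + psiMix μ g)
  refine (tendsto_add_atTop_iff_nat 1).1 (squeeze_zero (fun n => ?_)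
    (fun n => rho_succ_le hinv hmix.1 hp d i₀ n ω) hbound)
  exact Finset.prod_nonneg fun _ _ => div_nonneg ENNReal.toReal_nonneg ENNReal.toReal_nonneg

/-- second part of Lemma 3.7 / (2.13). If `μ` is ψ-mixing and
`ω ∈ Ω_ℙ` is not periodic, then `ρ_{A_n^ω} → 0` as `n → ∞`. -/
theorem rho_tendsto_zero_of_not_periodic
    [Countable 𝒜] [MeasurableSingletonClass 𝒜] [Nontrivial 𝒜]
    (μ : Measure (ℕ → 𝒜)) [IsProbabilityMeasure μ]
    (hinv : MeasurePreserving (shift : (ℕ → 𝒜) → ℕ → 𝒜) μ μ)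
    (hpos : ∀ a : 𝒜, 0 < μ (cyl 1 fun _ => a))
    (hmix : IsPsiMixing μ)
    (ℓ : ℕ) (hl : 0 < ℓ) (d : Fin ℓ → ℕ) (hd1 : ∀ i, 1 ≤ d i) (hdmono : StrictMono d)
    (ω : ℕ → 𝒜) (hΩP : ∀ n : ℕ, μ (cyl n ω) ≠ 0)
    (hnp : ∀ dper : ℕ, 0 < dper → ¬ Function.IsPeriodicPt shift dper ω) :
    Tendsto (fun n => rho μ ℓ d n ω) atTop (nhds 0) :=
  rho_tendsto_zero_of_not_periodic_general μ hinv hpos hmix ℓ hl d hd1 ω hnp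

end Nonconv
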